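/- arXiv:2107.08219 — 5 statements merged into one kernel-verified Lean document; each statement's English description precedes it below -/
import Mathlib

section
/- Equality in the sharp Sobolev inequality on ℝ^d (d ≥ 3) is achieved by the function g(x) = (1 + |x|²)^{-(d-2)/2}; that is, ∫ |∇g|² dx = S_d (∫ |g|^{2d/(d-2)} dx)^{(d-2)/d}. -/
/-!
Both sides are radial integrals. In polar coordinates, followed by the substitution
`r² = t / (1 - t)`, every integral `∫_{ℝⁿ} |x|^p (1 + |x|²)^(-b) dx` becomes a Beta integral,
equal to `π^(n/2) Γ((n+p)/2) Γ(b - (n+p)/2) / (Γ(n/2) Γ(b))`. Since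
`|∇g|² = (d-2)² |x|² (1 + |x|²)^(-d)` and `|g|^(2d/(d-2)) = (1 + |x|²)^(-d)`, both sides are
multiples of `I = π^(d/2) Γ(d/2) / Γ(d)`: the left side is `d (d-2) I`, and, as
`S_d = d (d-2) I^(2/d)`, so is the right side `S_d I^((d-2)/d)`.
-/

open MeasureTheory Real

noncomputable def sobolevConst (d : ℕ) : ℝ :=
  Real.pi * d * (d - 2) * (Real.Gamma (d / 2) / Real.Gamma d) ^ ((2 : ℝ) / d)

/-- The Aubin-Talenti function. -/
noncomputable def aubinTalenti (d : ℕ) (x : EuclideanSpace ℝ (Fin d)) : ℝ :=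
  (1 + ‖x‖ ^ 2) ^ (-((d : ℝ) - 2) / 2)

open Set Module

theorem integral_Ioo_rpow_mul_one_sub_rpow {u v : ℝ} (hu : 0 < u) (hv : 0 < v) :
    ∫ t in Ioo (0 : ℝ) 1, t ^ (u - 1) * (1 - t) ^ (v - 1) =
      Gamma u * Gamma v / Gamma (u + v) := by
  have h := Complex.betaIntegral_eq_Gamma_mul_div u v (by simpa) (by simpa)
  rw [Complex.betaIntegral, intervalIntegral.integral_of_le zero_le_one,
    integral_Ioc_eq_integral_Ioo, ← Complex.ofReal_add, Complex.Gamma_ofReal,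
    Complex.Gamma_ofReal, Complex.Gamma_ofReal] at h
  rw [← Complex.ofReal_inj, ← integral_complex_ofReal, Complex.ofReal_div, Complex.ofReal_mul,
    ← h]
  refine setIntegral_congr_fun measurableSet_Ioo fun t ht ↦ ?_
  rw [Complex.ofReal_mul, Complex.ofReal_cpow ht.1.le, Complex.ofReal_cpow (sub_pos.2 ht.2).le]
  push_cast
  rfl

theorem integral_Ioi_rpow_mul_one_add_rpow_neg {u v : ℝ} (hu : 0 < u) (hv : 0 < v) :
    ∫ x in Ioi (0 : ℝ), x ^ (u - 1) * (1 + x) ^ (-(u + v)) =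
      Gamma u * Gamma v / Gamma (u + v) := by
  have image_eq : (fun t : ℝ ↦ t / (1 - t)) '' Ioo 0 1 = Ioi 0 := by
    refine Subset.antisymm ?_ fun x (hx : 0 < x) ↦ ⟨x / (1 + x), ?_, ?_⟩
    · rintro _ ⟨t, ht, rfl⟩
      exact div_pos ht.1 (sub_pos.2 ht.2)
    · exact ⟨by positivity, (div_lt_one (by positivity)).2 (by linarith)⟩
    · field_simp
      ring
  have hasDeriv (t : ℝ) (ht : t ∈ Ioo (0 : ℝ) 1) :
      HasDerivWithinAt (fun t : ℝ ↦ t / (1 - t)) ((1 - t) ^ (-2 : ℝ)) (Ioo 0 1) t := by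
    have h1t : 1 - t ≠ 0 := (sub_pos.2 ht.2).ne'
    refine (((hasDerivAt_id t).div ((hasDerivAt_id t).const_sub 1) h1t).congr_deriv ?_)
      |>.hasDerivWithinAt
    rw [rpow_neg (sub_pos.2 ht.2).le, rpow_two]
    simp only [id]
    field_simp
    ring
  have injOn : InjOn (fun t : ℝ ↦ t / (1 - t)) (Ioo 0 1) := by
    intro a ha b hb hab
    have : 1 - a ≠ 0 := (sub_pos.2 ha.2).ne'
    have : 1 - b ≠ 0 := (sub_pos.2 hb.2).ne'
    field_simp at hab
    linarith
  rw [← image_eq, integral_image_eq_integral_abs_deriv_smul measurableSet_Ioo hasDeriv injOn,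
    ← integral_Ioo_rpow_mul_one_sub_rpow hu hv]
  refine setIntegral_congr_fun measurableSet_Ioo fun t ht ↦ ?_
  have h1t : 0 < 1 - t := sub_pos.2 ht.2
  have one_add : 1 + t / (1 - t) = (1 - t)⁻¹ := by field_simp; ring
  rw [smul_eq_mul, abs_of_pos (rpow_pos_of_pos h1t _), one_add, div_rpow ht.1.le h1t.le,
    inv_rpow h1t.le, ← rpow_neg h1t.le, neg_neg, div_eq_mul_inv, ← rpow_neg h1t.le]
  calc (1 - t) ^ (-2 : ℝ) * (t ^ (u - 1) * (1 - t) ^ (-(u - 1)) * (1 - t) ^ (u + v))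
      = t ^ (u - 1) * ((1 - t) ^ (-2 : ℝ) * (1 - t) ^ (-(u - 1)) * (1 - t) ^ (u + v)) := by ring
    _ = t ^ (u - 1) * (1 - t) ^ (v - 1) := by
      rw [← rpow_add h1t, ← rpow_add h1t]
      ring_nf

theorem integral_Ioi_rpow_mul_one_add_sq_rpow_neg {a b : ℝ} (ha : 0 < a) (hab : a < b) :
    ∫ r in Ioi (0 : ℝ), r ^ (2 * a - 1) * (1 + r ^ 2) ^ (-b)
      = Gamma a * Gamma (b - a) / (2 * Gamma b) := by
  have beta := integral_Ioi_rpow_mul_one_add_rpow_neg ha (sub_pos.2 hab)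
  rw [add_sub_cancel, ← integral_comp_rpow_Ioi_of_pos two_pos] at beta
  rw [mul_comm 2 (Gamma b), ← div_div, ← beta, ← integral_div]
  refine setIntegral_congr_fun measurableSet_Ioi fun r (hr : 0 < r) ↦ ?_
  rw [smul_eq_mul, rpow_two, ← rpow_natCast, ← rpow_mul hr.le, Nat.cast_ofNat,
    show (2 : ℝ) - 1 = 1 by norm_num, rpow_one, show 2 * a - 1 = 2 * (a - 1) + 1 by ring,
    rpow_add_one hr.ne']
  ring

section Radial

variable {E : Type*} [NormedAddCommGroup E] [InnerProductSpace ℝ E] [FiniteDimensional ℝ E]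
  [MeasurableSpace E] [BorelSpace E] [Nontrivial E]

theorem integral_fun_norm_eq_integral_Ioi (f : ℝ → ℝ) :
    ∫ x : E, f ‖x‖ = 2 * π ^ ((finrank ℝ E : ℝ) / 2) / Gamma ((finrank ℝ E : ℝ) / 2) *
      ∫ r in Ioi (0 : ℝ), r ^ (finrank ℝ E - 1) * f r := by
  set n := finrank ℝ E
  have hn : (0 : ℝ) < n := by exact_mod_cast finrank_pos
  have sphere_area :
      n * (√π ^ n / Gamma (n / 2 + 1)) = 2 * π ^ ((n : ℝ) / 2) / Gamma (n / 2) := by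
    rw [Gamma_add_one (by positivity), sqrt_eq_rpow, ← rpow_natCast, ← rpow_mul pi_pos.le]
    field_simp
  rw [integral_fun_norm_addHaar, measureReal_def, InnerProductSpace.volume_ball,
    ENNReal.ofReal_one, one_pow, one_mul, ENNReal.toReal_ofReal (by positivity), nsmul_eq_mul,
    smul_eq_mul, ← mul_assoc, sphere_area]
  rfl

theorem integral_norm_rpow_mul_one_add_norm_sq_rpow_neg {p b : ℝ}
    (hp : 0 < (finrank ℝ E : ℝ) + p) (hb : ((finrank ℝ E : ℝ) + p) / 2 < b) :
    ∫ x : E, ‖x‖ ^ p * (1 + ‖x‖ ^ 2) ^ (-b) =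
      π ^ ((finrank ℝ E : ℝ) / 2) * Gamma ((finrank ℝ E + p) / 2) *
        Gamma (b - (finrank ℝ E + p) / 2) / (Gamma ((finrank ℝ E : ℝ) / 2) * Gamma b) := by
  have hn : 1 ≤ finrank ℝ E := finrank_pos
  have radial : ∫ r in Ioi (0 : ℝ), r ^ (finrank ℝ E - 1) * (r ^ p * (1 + r ^ 2) ^ (-b)) =
      ∫ r in Ioi (0 : ℝ), r ^ (2 * ((finrank ℝ E + p) / 2) - 1) * (1 + r ^ 2) ^ (-b) := by
    refine setIntegral_congr_fun measurableSet_Ioi fun r (hr : 0 < r) ↦ ?_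
    rw [← mul_assoc, ← rpow_natCast, ← rpow_add hr, Nat.cast_sub hn]
    ring_nf
  rw [integral_fun_norm_eq_integral_Ioi (fun r ↦ r ^ p * (1 + r ^ 2) ^ (-b)), radial,
    integral_Ioi_rpow_mul_one_add_sq_rpow_neg (by linarith) hb]
  have := Gamma_pos_of_pos (by linarith : 0 < b)
  have := Gamma_pos_of_pos (by positivity : (0 : ℝ) < finrank ℝ E / 2)
  field_simp

end Radial

theorem hasGradientAt_one_add_norm_sq_rpow {F : Type*} [NormedAddCommGroup F]
    [InnerProductSpace ℝ F] [CompleteSpace F] (s : ℝ) (x : F) :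
    HasGradientAt (fun y ↦ (1 + ‖y‖ ^ 2) ^ s) ((2 * s * (1 + ‖x‖ ^ 2) ^ (s - 1)) • x) x := by
  rw [hasGradientAt_iff_hasFDerivAt]
  refine (((hasStrictFDerivAt_norm_sq x).hasFDerivAt.const_add 1).rpow_const
    (Or.inl (by positivity))).congr_fderiv ?_
  ext y
  simp
  ring

theorem norm_gradient_aubinTalenti_sq (d : ℕ) (x : EuclideanSpace ℝ (Fin d)) :
    ‖gradient (aubinTalenti d) x‖ ^ 2 =
      (d - 2) ^ 2 * (‖x‖ ^ (2 : ℝ) * (1 + ‖x‖ ^ 2) ^ (-(d : ℝ))) := by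
  have power :
      ((1 + ‖x‖ ^ 2) ^ (-((d : ℝ) - 2) / 2 - 1)) ^ 2 = (1 + ‖x‖ ^ 2) ^ (-(d : ℝ)) := by
    rw [← rpow_mul_natCast (by positivity)]
    ring_nf
  unfold aubinTalenti
  rw [(hasGradientAt_one_add_norm_sq_rpow _ x).gradient, norm_smul, mul_pow, norm_mul,
    mul_pow, Real.norm_eq_abs, Real.norm_eq_abs, sq_abs, sq_abs, power, rpow_two]
  ring

theorem abs_aubinTalenti_rpow {d : ℕ} (hd : d ≠ 2) (x : EuclideanSpace ℝ (Fin d)) :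
    |aubinTalenti d x| ^ ((2 * d : ℝ) / ((d : ℝ) - 2)) = (1 + ‖x‖ ^ 2) ^ (-(d : ℝ)) := by
  have hd' : (d : ℝ) - 2 ≠ 0 := sub_ne_zero.2 (by exact_mod_cast hd)
  rw [aubinTalenti, abs_of_pos (by positivity), ← rpow_mul (by positivity)]
  congr 1
  field_simp

theorem sobolevConst_eq {d : ℕ} (hd : d ≠ 0) :
    sobolevConst d =
      d * (d - 2) * (π ^ ((d : ℝ) / 2) * (Gamma (d / 2) / Gamma d)) ^ ((2 : ℝ) / d) := by
  have hd' : (0 : ℝ) < d := by positivity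
  have hΓ : 0 < Gamma (d / 2) / Gamma d :=
    div_pos (Gamma_pos_of_pos (by positivity)) (Gamma_pos_of_pos hd')
  rw [sobolevConst, mul_rpow (by positivity) hΓ.le, ← rpow_mul pi_pos.le,
    show (d : ℝ) / 2 * (2 / d) = 1 by field_simp, rpow_one]
  ring

theorem integral_norm_gradient_aubinTalenti_sq {d : ℕ} (hd : 3 ≤ d) :
    ∫ x, ‖gradient (aubinTalenti d) x‖ ^ 2 =
      d * (d - 2) * (π ^ ((d : ℝ) / 2) * (Gamma (d / 2) / Gamma d)) := by
  have : NeZero d := ⟨by omega⟩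
  have hd' : (3 : ℝ) ≤ d := by exact_mod_cast hd
  have hΓ : Gamma (d / 2) = (d / 2 - 1) * Gamma (d / 2 - 1) := by
    rw [← Gamma_add_one (by linarith), sub_add_cancel]
  have := Gamma_pos_of_pos (by linarith : (0 : ℝ) < d / 2 - 1)
  have := Gamma_pos_of_pos (by linarith : (0 : ℝ) < d)
  simp_rw [norm_gradient_aubinTalenti_sq, integral_const_mul]
  rw [integral_norm_rpow_mul_one_add_norm_sq_rpow_neg (by simp; positivity) (by simp; linarith),
    finrank_euclideanSpace_fin, show ((d : ℝ) + 2) / 2 = d / 2 + 1 by ring,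
    show (d : ℝ) - (d / 2 + 1) = d / 2 - 1 by ring, Gamma_add_one (by positivity), hΓ]
  field_simp

theorem integral_abs_aubinTalenti_rpow {d : ℕ} (hd₀ : d ≠ 0) (hd₂ : d ≠ 2) :
    ∫ x, |aubinTalenti d x| ^ ((2 * d : ℝ) / ((d : ℝ) - 2)) =
      π ^ ((d : ℝ) / 2) * (Gamma (d / 2) / Gamma d) := by
  have : NeZero d := ⟨hd₀⟩
  have := Gamma_pos_of_pos (by positivity : (0 : ℝ) < d / 2)
  have integrand (x : EuclideanSpace ℝ (Fin d)) :
      |aubinTalenti d x| ^ ((2 * d : ℝ) / ((d : ℝ) - 2)) =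
        ‖x‖ ^ (0 : ℝ) * (1 + ‖x‖ ^ 2) ^ (-(d : ℝ)) := by
    rw [abs_aubinTalenti_rpow hd₂, rpow_zero, one_mul]
  simp_rw [integrand]
  rw [integral_norm_rpow_mul_one_add_norm_sq_rpow_neg (by simp; omega) (by simp; omega),
    finrank_euclideanSpace_fin, add_zero, sub_half]
  field_simp

/-- Equality in the sharp Sobolev inequality on `ℝ^d` is achieved by the
Aubin-Talenti function `g(x) = (1 + |x|²)^{-(d-2)/2}`. -/
theorem sobolev_equality_aubinTalenti (d : ℕ) (hd : 3 ≤ d) :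
    ∫ x, ‖gradient (aubinTalenti d) x‖ ^ 2 =
      sobolevConst d *
        (∫ x, |aubinTalenti d x| ^ ((2 * d : ℝ) / ((d : ℝ) - 2))) ^
          (((d : ℝ) - 2) / d) := by
  have hd' : (0 : ℝ) < d := by positivity
  set I := π ^ ((d : ℝ) / 2) * (Gamma (d / 2) / Gamma d)
  have hI : 0 < I := by
    have := Gamma_pos_of_pos (half_pos hd')
    have := Gamma_pos_of_pos hd'
    positivity
  rw [integral_norm_gradient_aubinTalenti_sq hd,
    integral_abs_aubinTalenti_rpow (by omega) (by omega), sobolevConst_eq (by omega),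
    mul_assoc ((d : ℝ) * (d - 2)) (I ^ _), ← rpow_add hI, ← add_div, add_sub_cancel,
    div_self hd'.ne', rpow_one]
end

section
/- Let dμ = Z^{-1} e^{-φ} dx be a probability measure on ℝ^d with φ smooth. For every positive smooth function h with sufficient decay: ∫ (Lh) (|∇h|²/h) dμ = ∫ |∇h|⁴/h² dμ - 2 ∫ Hess h : (∇h ⊗ ∇h)/h dμ, where L = Δ - ∇φ·∇. -/
open MeasureTheory Real

variable {d : ℕ}

/-- Partial derivative `∂f/∂xᵢ`. -/
noncomputable def pd (f : EuclideanSpace ℝ (Fin d) → ℝ) (i : Fin d)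
    (x : EuclideanSpace ℝ (Fin d)) : ℝ :=
  fderiv ℝ f x (EuclideanSpace.single i 1)

/-- Hessian entry `∂²f/∂xᵢ∂xⱼ`. -/
noncomputable def hess (f : EuclideanSpace ℝ (Fin d) → ℝ) (i j : Fin d)
    (x : EuclideanSpace ℝ (Fin d)) : ℝ :=
  pd (pd f j) i x

/-- Laplacian. -/
noncomputable def lap (f : EuclideanSpace ℝ (Fin d) → ℝ)
    (x : EuclideanSpace ℝ (Fin d)) : ℝ :=
  ∑ i, hess f i i x

/-- The Ornstein–Uhlenbeck type operator `L = Δ - ∇φ·∇`. -/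
noncomputable def Lop (φ f : EuclideanSpace ℝ (Fin d) → ℝ)
    (x : EuclideanSpace ℝ (Fin d)) : ℝ :=
  lap f x - ∑ i, pd φ i x * pd f i x

section helpers
variable {f g : EuclideanSpace ℝ (Fin d) → ℝ} {i : Fin d} {x : EuclideanSpace ℝ (Fin d)}

lemma contDiff_pd (hf : ContDiff ℝ (⊤ : ℕ∞) f) (i : Fin d) : ContDiff ℝ (⊤ : ℕ∞) (pd f i) :=
  (hf.fderiv_right (by simp)).clm_apply contDiff_const

lemma hcs_pd0 (hg : HasCompactSupport f) (i : Fin d) : HasCompactSupport (pd f i) :=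
  hg.fderiv_apply ℝ (EuclideanSpace.single i 1)

lemma pd_sub_const (c : ℝ) : pd (fun y => f y - c) i = pd f i := by
  funext x; simp only [pd, fderiv_sub_const]

lemma pd_mul (hf : DifferentiableAt ℝ f x) (hg : DifferentiableAt ℝ g x) :
    pd (fun y => f y * g y) i x = pd f i x * g x + f x * pd g i x := by
  simp only [pd, fderiv_fun_mul hf hg, ContinuousLinearMap.add_apply,
    ContinuousLinearMap.smul_apply, smul_eq_mul]
  ring

lemma pd_sum {ι : Type*} {s : Finset ι} {A : ι → EuclideanSpace ℝ (Fin d) → ℝ}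
    (hA : ∀ j ∈ s, DifferentiableAt ℝ (A j) x) :
    pd (fun y => ∑ j ∈ s, A j y) i x = ∑ j ∈ s, pd (A j) i x := by
  simp only [pd, fderiv_fun_sum hA, ContinuousLinearMap.sum_apply]

lemma pd_inv (hf : DifferentiableAt ℝ f x) (hx : f x ≠ 0) :
    pd (fun y => (f y)⁻¹) i x = -pd f i x / f x ^ 2 := by
  have h1 : HasFDerivAt (fun y => (f y)⁻¹) ((-(f x ^ 2)⁻¹) • fderiv ℝ f x) x :=
    (hasDerivAt_inv hx).comp_hasFDerivAt x hf.hasFDerivAt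
  simp only [pd, h1.fderiv, ContinuousLinearMap.smul_apply, smul_eq_mul]
  field_simp

lemma pd_exp_neg (hf : DifferentiableAt ℝ f x) :
    pd (fun y => Real.exp (-f y)) i x = -Real.exp (-f x) * pd f i x := by
  have : pd (fun y => Real.exp (-f y)) i x
      = Real.exp (-f x) * pd (fun y => -f y) i x := by
    simp only [pd, fderiv_exp hf.fun_neg, ContinuousLinearMap.smul_apply, smul_eq_mul]
  rw [this]
  simp only [pd, fderiv_fun_neg, ContinuousLinearMap.neg_apply]
  ring

lemma pd_const_mul (hf : DifferentiableAt ℝ f x) (a : ℝ) :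
    pd (fun y => a * f y) i x = a * pd f i x := by
  simp only [pd, fderiv_const_mul hf a, ContinuousLinearMap.smul_apply, smul_eq_mul]

end helpers

section ibp
variable {f g : EuclideanSpace ℝ (Fin d) → ℝ} {i : Fin d}

lemma ibp_zero (hf : Differentiable ℝ f) (hg : Differentiable ℝ g)
    (h1 : Integrable (fun x => pd f i x * g x) (volume : Measure (EuclideanSpace ℝ (Fin d))))
    (h2 : Integrable (fun x => f x * pd g i x) volume)
    (h3 : Integrable (fun x => f x * g x) volume) :
    ∫ x, f x * pd g i x = - ∫ x, pd f i x * g x := by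
  simp only [pd] at h1 h2 ⊢
  exact integral_mul_fderiv_eq_neg_fderiv_mul_of_integrable h1 h2 h3 (fun x _ => hf x) (fun x _ => hg x)

end ibp

lemma hcs_sum {ι : Type*} (s : Finset ι) (f : ι → EuclideanSpace ℝ (Fin d) → ℝ)
    (hf : ∀ i ∈ s, HasCompactSupport (f i)) :
    HasCompactSupport fun x => ∑ i ∈ s, f i x := by
  classical
  induction s using Finset.induction with
  | empty => simpa using (by simp [HasCompactSupport, tsupport] :
      HasCompactSupport (fun _ : EuclideanSpace ℝ (Fin d) => (0:ℝ)))
  | @insert a s ha ih =>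
      simp only [Finset.sum_insert ha]
      exact (hf a (Finset.mem_insert_self a s)).add
        (ih fun i hi => hf i (Finset.mem_insert_of_mem hi))

/-- The integration-by-parts identity (Id2-OU) of the carré du champ method:
`∫ (Lh) |∇h|²/h dμ = ∫ |∇h|⁴/h² dμ - 2 ∫ Hess h : (∇h ⊗ ∇h)/h dμ`
for a positive smooth function `h` with sufficient decay (here: `h` is
constant outside a compact set). -/
theorem ibp_identity_carre_du_champ (d : ℕ) (hd : 1 ≤ d)
    (φ : EuclideanSpace ℝ (Fin d) → ℝ) (hφ : ContDiff ℝ (⊤ : ℕ∞) φ) (Z : ℝ) (hZ : 0 < Z)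
    (μ : Measure (EuclideanSpace ℝ (Fin d)))
    (hμ : μ = volume.withDensity fun x => ENNReal.ofReal (Z⁻¹ * Real.exp (-φ x)))
    [IsProbabilityMeasure μ]
    (h : EuclideanSpace ℝ (Fin d) → ℝ) (hh : ContDiff ℝ (⊤ : ℕ∞) h)
    (hpos : ∀ x, 0 < h x)
    (hdecay : ∃ c : ℝ, 0 < c ∧ HasCompactSupport (fun x => h x - c)) :
    ∫ x, Lop φ h x * ((∑ i, (pd h i x) ^ 2) / h x) ∂μ =
      ∫ x, (∑ i, (pd h i x) ^ 2) ^ 2 / (h x) ^ 2 ∂μ -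
        2 * ∫ x, (∑ i, ∑ j, hess h i j x * pd h i x * pd h j x) / h x ∂μ := by
  obtain ⟨c, hc, hsupp⟩ := hdecay
  subst hμ
  set ρ : EuclideanSpace ℝ (Fin d) → ℝ := fun x => Z⁻¹ * Real.exp (-φ x) with hρdef
  set S : EuclideanSpace ℝ (Fin d) → ℝ := fun x => ∑ i, (pd h i x) ^ 2 with hSdef
  set T : EuclideanSpace ℝ (Fin d) → ℝ := fun x => ∑ i, ∑ j, hess h i j x * pd h i x * pd h j x with hTdef
  set w : EuclideanSpace ℝ (Fin d) → ℝ := fun x => S x / h x with hwdef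
  have hne : ∀ x, h x ≠ 0 := fun x => (hpos x).ne'
  have ρpos : ∀ x, 0 < ρ x := fun x => mul_pos (inv_pos.2 hZ) (Real.exp_pos _)
  -- smoothness
  have ρSmooth : ContDiff ℝ (⊤ : ℕ∞) ρ := contDiff_const.mul (hφ.neg.exp)
  have pdhSmooth : ∀ i, ContDiff ℝ (⊤ : ℕ∞) (pd h i) := fun i => contDiff_pd hh i
  have hessSmooth : ∀ i j, ContDiff ℝ (⊤ : ℕ∞) (hess h i j) := fun i j =>
    contDiff_pd (contDiff_pd hh j) i
  have SSmooth : ContDiff ℝ (⊤ : ℕ∞) S :=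
    ContDiff.sum fun i _ => (pdhSmooth i).pow 2
  have wSmooth : ContDiff ℝ (⊤ : ℕ∞) w := SSmooth.div hh hne
  have diffh : Differentiable ℝ h := hh.differentiable (by simp)
  have diffρ : Differentiable ℝ ρ := ρSmooth.differentiable (by simp)
  have diffφ : Differentiable ℝ φ := hφ.differentiable (by simp)
  have diffpdh : ∀ i, Differentiable ℝ (pd h i) := fun i =>
    (pdhSmooth i).differentiable (by simp)
  have diffS : Differentiable ℝ S := SSmooth.differentiable (by simp)
  have diffw : Differentiable ℝ w := wSmooth.differentiable (by simp)
  have difff : ∀ i : Fin d, Differentiable ℝ (fun x => ρ x * pd h i x) := fun i =>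
    diffρ.mul (diffpdh i)
  -- compact supports
  have cs_pd : ∀ i, HasCompactSupport (pd h i) := fun i => by
    rw [← pd_sub_const (f := h) (c := c)]; exact hcs_pd0 hsupp i
  have cs_hess : ∀ i j, HasCompactSupport (hess h i j) := fun i j =>
    hcs_pd0 (cs_pd j) i
  have cs_S : HasCompactSupport S :=
    hcs_sum _ _ fun i _ => by
      have := (cs_pd i).mul_right (f' := pd h i)
      simp only [pow_two]; exact this
  have cs_T : HasCompactSupport T :=
    hcs_sum _ _ fun i _ => hcs_sum _ _ fun j _ =>
      ((cs_hess i j).mul_right (f' := pd h i)).mul_right (f' := pd h j)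
  -- derivative formulas
  have pdρ : ∀ (i : Fin d) x, pd ρ i x = -(ρ x * pd φ i x) := by
    intro i x
    rw [hρdef]
    rw [pd_const_mul ((diffφ x).fun_neg.exp) Z⁻¹, pd_exp_neg (diffφ x)]
    ring
  have formulaA : ∀ (i : Fin d) x, pd (fun y => ρ y * pd h i y) i x
      = ρ x * (hess h i i x - pd φ i x * pd h i x) := by
    intro i x
    rw [pd_mul (diffρ x) (diffpdh i x), pdρ i x]
    have : pd (pd h i) i x = hess h i i x := rfl
    rw [this]; ring
  have pdsq : ∀ (j i : Fin d) x, pd (fun y => pd h j y ^ 2) i x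
      = 2 * (pd h j x * hess h i j x) := by
    intro j i x
    have e : (fun y => pd h j y ^ 2) = fun y => pd h j y * pd h j y := by
      funext y; ring
    rw [e, pd_mul (diffpdh j x) (diffpdh j x)]
    have e2 : pd (pd h j) i x = hess h i j x := rfl
    rw [e2]; ring
  have pdS : ∀ (i : Fin d) x, pd S i x = ∑ j, 2 * (pd h j x * hess h i j x) := by
    intro i x
    rw [hSdef, pd_sum (fun j _ => (diffpdh j x).fun_pow 2)]
    exact Finset.sum_congr rfl fun j _ => pdsq j i x
  have pdw : ∀ (i : Fin d) x, pd w i x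
      = (∑ j, 2 * (pd h j x * hess h i j x)) * (h x)⁻¹
        + S x * (-pd h i x / h x ^ 2) := by
    intro i x
    have e : w = fun y => S y * (h y)⁻¹ := by
      funext y
      show S y / h y = S y * (h y)⁻¹
      rw [div_eq_mul_inv]
    rw [e, pd_mul (diffS x) ((diffh x).fun_inv (hne x)), pd_inv (diffh x) (hne x),
      pdS i x]
  -- conversion of withDensity integrals
  have conv : ∀ g : EuclideanSpace ℝ (Fin d) → ℝ,
      ∫ x, g x ∂(volume.withDensity fun x => ENNReal.ofReal (Z⁻¹ * Real.exp (-φ x)))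
        = ∫ x, ρ x * g x := by
    intro g
    have m : Measurable fun x => Real.toNNReal (ρ x) :=
      measurable_real_toNNReal.comp ρSmooth.continuous.measurable
    rw [show (fun x => ENNReal.ofReal (Z⁻¹ * Real.exp (-φ x)))
        = (fun x => ((Real.toNNReal (ρ x) : NNReal) : ENNReal)) from rfl]
    rw [integral_withDensity_eq_integral_smul m g]
    congr 1; funext x
    rw [NNReal.smul_def, smul_eq_mul, Real.coe_toNNReal _ (ρpos x).le]
  -- continuity
  have contw : Continuous w := wSmooth.continuous
  have contρ : Continuous ρ := ρSmooth.continuous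
  have contpdh : ∀ i, Continuous (pd h i) := fun i => (pdhSmooth i).continuous
  have contpdw : ∀ i, Continuous (pd w i) := fun i =>
    (contDiff_pd wSmooth i).continuous
  have contA : ∀ i : Fin d, Continuous (fun x => pd (fun y => ρ y * pd h i y) i x) :=
    fun i => (contDiff_pd (ρSmooth.mul (pdhSmooth i)) i).continuous
  -- integrability
  have h1 : ∀ i : Fin d,
      Integrable (fun x => pd (fun y => ρ y * pd h i y) i x * w x) volume := by
    intro i
    apply Continuous.integrable_of_hasCompactSupport ((contA i).mul contw)
    have e : (fun x => pd (fun y => ρ y * pd h i y) i x * w x)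
        = fun x => (ρ x * (hess h i i x - pd φ i x * pd h i x)) * w x := by
      funext x; rw [formulaA]
    show HasCompactSupport (fun x => pd (fun y => ρ y * pd h i y) i x * w x); rw [e]
    have base : HasCompactSupport (fun x => hess h i i x - pd φ i x * pd h i x) := by
      have c1 : HasCompactSupport (fun x => pd φ i x * pd h i x) := by
        exact (cs_pd i).mul_left (f := pd φ i)
      simp only [sub_eq_add_neg]
      exact (cs_hess i i).add (by simpa [Function.comp_def] using c1.comp_left (g := fun t : ℝ => -t) neg_zero)
    have : HasCompactSupport ((fun x => ρ x * (hess h i i x - pd φ i x * pd h i x))) := by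
      exact base.mul_left (f := ρ)
    exact this.mul_right (f' := w)
  have h2 : ∀ i : Fin d,
      Integrable (fun x => (ρ x * pd h i x) * pd w i x) volume := by
    intro i
    apply Continuous.integrable_of_hasCompactSupport ((contρ.mul (contpdh i)).mul (contpdw i))
    have : HasCompactSupport (fun x => ρ x * pd h i x) := by
      exact (cs_pd i).mul_left (f := ρ)
    exact this.mul_right (f' := pd w i)
  have h3 : ∀ i : Fin d,
      Integrable (fun x => (ρ x * pd h i x) * w x) volume := by
    intro i
    apply Continuous.integrable_of_hasCompactSupport ((contρ.mul (contpdh i)).mul contw)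
    have : HasCompactSupport (fun x => ρ x * pd h i x) := by
      exact (cs_pd i).mul_left (f := ρ)
    exact this.mul_right (f' := w)
  -- integration by parts in each coordinate
  have key : ∀ i : Fin d, ∫ x, (ρ x * pd h i x) * pd w i x
      = - ∫ x, pd (fun y => ρ y * pd h i y) i x * w x := fun i =>
    ibp_zero (difff i) diffw (h1 i) (h2 i) (h3 i)
  have E1 : ∫ x, (∑ i, (ρ x * pd h i x) * pd w i x)
      = ∑ i, ∫ x, (ρ x * pd h i x) * pd w i x :=
    integral_finset_sum Finset.univ fun i _ => h2 i
  have E2 : ∫ x, (∑ i, pd (fun y => ρ y * pd h i y) i x * w x)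
      = ∑ i, ∫ x, pd (fun y => ρ y * pd h i y) i x * w x :=
    integral_finset_sum Finset.univ fun i _ => h1 i
  have main : ∫ x, (∑ i, (ρ x * pd h i x) * pd w i x)
      = - ∫ x, (∑ i, pd (fun y => ρ y * pd h i y) i x * w x) := by
    rw [E1, E2, ← Finset.sum_neg_distrib]
    exact Finset.sum_congr rfl fun i _ => key i
  -- pointwise identification
  have P1 : ∀ x, (∑ i, (ρ x * pd h i x) * pd w i x)
      = ρ x * (2 * T x / h x - S x ^ 2 / h x ^ 2) := by
    intro x
    have step : ∀ i : Fin d, (ρ x * pd h i x) * pd w i x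
        = (2 * (ρ x * (h x)⁻¹)) * (∑ j, hess h i j x * pd h i x * pd h j x)
          - (ρ x * S x / h x ^ 2) * pd h i x ^ 2 := by
      intro i
      rw [pdw i x]
      have inner : pd h i x * ∑ j, 2 * (pd h j x * hess h i j x)
          = 2 * ∑ j, hess h i j x * pd h i x * pd h j x := by
        rw [Finset.mul_sum, Finset.mul_sum]
        exact Finset.sum_congr rfl fun j _ => by ring
      calc (ρ x * pd h i x) * ((∑ j, 2 * (pd h j x * hess h i j x)) * (h x)⁻¹
            + S x * (-pd h i x / h x ^ 2))
          = (ρ x * (h x)⁻¹) * (pd h i x * ∑ j, 2 * (pd h j x * hess h i j x))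
            - (ρ x * S x / h x ^ 2) * pd h i x ^ 2 := by ring
        _ = _ := by rw [inner]; ring
    rw [Finset.sum_congr rfl fun i _ => step i, Finset.sum_sub_distrib,
      ← Finset.mul_sum, ← Finset.mul_sum]
    have eT : (∑ i, ∑ j, hess h i j x * pd h i x * pd h j x) = T x := rfl
    have eS : (∑ i, pd h i x ^ 2) = S x := rfl
    rw [eT, eS]; ring
  have P2 : ∀ x, (∑ i, pd (fun y => ρ y * pd h i y) i x * w x)
      = ρ x * (Lop φ h x * w x) := by
    intro x
    calc ∑ i, pd (fun y => ρ y * pd h i y) i x * w x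
        = ∑ i : Fin d, (ρ x * w x) * (hess h i i x - pd φ i x * pd h i x) :=
          Finset.sum_congr rfl fun i _ => by rw [formulaA i x]; ring
      _ = (ρ x * w x) * ∑ i, (hess h i i x - pd φ i x * pd h i x) := by
          rw [Finset.mul_sum]
      _ = ρ x * (Lop φ h x * w x) := by
          rw [Finset.sum_sub_distrib]
          simp only [Lop, lap]
          ring
  simp_rw [P1, P2] at main
  -- remaining integrabilities
  have I4 : Integrable (fun x => ρ x * (S x ^ 2 / h x ^ 2)) volume := by
    apply Continuous.integrable_of_hasCompactSupport
    · exact contρ.mul ((SSmooth.continuous.pow 2).div ((hh.continuous).pow 2)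
        fun x => pow_ne_zero 2 (hne x))
    · have e : (fun x => ρ x * (S x ^ 2 / h x ^ 2))
          = fun x => S x * (ρ x * S x / h x ^ 2) := by funext x; ring
      rw [e]
      exact cs_S.mul_right (f' := fun x => ρ x * S x / h x ^ 2)
  have I5 : Integrable (fun x => ρ x * (T x / h x)) volume := by
    apply Continuous.integrable_of_hasCompactSupport
    · refine contρ.mul (Continuous.div ?_ hh.continuous hne)
      exact continuous_finset_sum _ fun i _ => continuous_finset_sum _ fun j _ =>
        (((hessSmooth i j).continuous.mul (contpdh i)).mul (contpdh j))
    · have e : (fun x => ρ x * (T x / h x)) = fun x => T x * (ρ x / h x) := by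
        funext x; ring
      rw [e]
      exact cs_T.mul_right (f' := fun x => ρ x / h x)
  have split : ∫ x, ρ x * (2 * T x / h x - S x ^ 2 / h x ^ 2)
      = 2 * (∫ x, ρ x * (T x / h x)) - ∫ x, ρ x * (S x ^ 2 / h x ^ 2) := by
    have e : (fun x => ρ x * (2 * T x / h x - S x ^ 2 / h x ^ 2))
        = fun x => 2 * (ρ x * (T x / h x)) - ρ x * (S x ^ 2 / h x ^ 2) := by
      funext x; ring
    rw [e, integral_sub ((I5.const_mul 2)) I4, integral_const_mul]
  -- assemble
  have GQL : ∫ x, Lop φ h x * ((∑ i, (pd h i x) ^ 2) / h x)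
        ∂(volume.withDensity fun x => ENNReal.ofReal (Z⁻¹ * Real.exp (-φ x)))
      = ∫ x, ρ x * (Lop φ h x * w x) := conv _
  have GQR1 : ∫ x, (∑ i, (pd h i x) ^ 2) ^ 2 / (h x) ^ 2
        ∂(volume.withDensity fun x => ENNReal.ofReal (Z⁻¹ * Real.exp (-φ x)))
      = ∫ x, ρ x * (S x ^ 2 / h x ^ 2) := conv _
  have GQR2 : ∫ x, (∑ i, ∑ j, hess h i j x * pd h i x * pd h j x) / h x
        ∂(volume.withDensity fun x => ENNReal.ofReal (Z⁻¹ * Real.exp (-φ x)))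
      = ∫ x, ρ x * (T x / h x) := conv _
  rw [GQL]
  rw [GQR1]
  rw [GQR2]
  rw [split] at main
  linarith [main]
end

section
/- Let d ≥ 1, p > 1, and let f : ℝ^d → ℝ be a nonnegative function with ∇f ∈ L²(ℝ^d), f^{p+1} ∈ L¹(ℝ^d) and |x|² f^{2p} ∈ L¹(ℝ^d). Then (d/(p+1))² (∫_{ℝ^d} f^{p+1} dx)² ≤ (∫_{ℝ^d} |∇f|² dx)(∫_{ℝ^d} |x|² f^{2p} dx). -/
/-!
For `g = f ^ (p + 1)`, integrating `x ↦ x i * ∂ᵢ g x` along each coordinate line gives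
the Euler-type identity `∫ ⟪x, ∇g x⟫ = -d ∫ g`. No boundary term appears: `t * g` has an
integrable derivative, hence limits at `±∞`, and these vanish because `g` is integrable. As
`∇g = (p + 1) f ^ p ∇f`, this gives `d ∫ f ^ (p + 1) ≤ (p + 1) ∫ ‖∇f‖ (‖x‖ f ^ p)`, and the
Cauchy–Schwarz inequality bounds the right-hand side by
`(p + 1) (∫ ‖∇f‖²) ^ (1/2) (∫ ‖x‖² f ^ (2p)) ^ (1/2)`.
-/

open MeasureTheory Real Filter Set Topology

theorem eq_zero_of_tendsto_mul_atTop_of_integrableOn_Ioi {h : ℝ → ℝ} {a m : ℝ}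
    (hm : Tendsto (fun t => t * h t) atTop (𝓝 m)) (hint : IntegrableOn h (Ioi a)) : m = 0 := by
  by_contra hm0
  obtain ⟨T, hT⟩ : ∃ T, ∀ t ≥ T, ‖m‖ / 2 < ‖t * h t‖ :=
    (hm.norm.eventually (eventually_gt_nhds (half_lt_self (norm_pos_iff.2 hm0))))
      |>.exists_forall_of_atTop
  set b := max (max T a) 0
  refine not_integrableOn_Ioi_inv (a := b) <| Integrable.mono'
    ((hint.mono_set (Ioi_subset_Ioi (by simp [b]))).norm.const_mul (2 / ‖m‖))
    measurable_inv.aestronglyMeasurable ((ae_restrict_iff' measurableSet_Ioi).2 ?_)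
  filter_upwards with t (ht : b < t)
  have ht0 : 0 < t := lt_of_le_of_lt (le_max_right _ _) ht
  have hmt := hT t (by simp only [b, max_lt_iff] at ht; exact ht.1.1.le)
  rw [norm_mul, norm_of_nonneg ht0.le] at hmt
  rw [norm_inv, norm_of_nonneg ht0.le, inv_le_iff_one_le_mul₀ ht0]
  have hm_pos : 0 < ‖m‖ := norm_pos_iff.2 hm0
  calc (1 : ℝ) = 2 / ‖m‖ * (‖m‖ / 2) := by field_simp
    _ ≤ 2 / ‖m‖ * (t * ‖h t‖) := by gcongr
    _ = 2 / ‖m‖ * ‖h t‖ * t := by ring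

theorem integral_id_mul_deriv_eq_neg_integral {h h' : ℝ → ℝ}
    (hderiv : ∀ t, HasDerivAt h (h' t) t) (hint : Integrable h)
    (hint' : Integrable fun t => t * h' t) :
    ∫ t, t * h' t = -∫ t, h t := by
  have hH : ∀ t, HasDerivAt (fun t => t * h t) (h t + t * h' t) t := fun t =>
    ((hasDerivAt_id' t).mul (hderiv t)).congr_deriv (by ring)
  have hH' : Integrable fun t => h t + t * h' t := hint.add hint'
  have htop := tendsto_limUnder_of_hasDerivAt_of_integrableOn_Ioi (a := 0)
    (fun t _ => hH t) hH'.integrableOn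
  have hbot := tendsto_limUnder_of_hasDerivAt_of_integrableOn_Iic (a := 0)
    (fun t _ => hH t) hH'.integrableOn
  rw [eq_zero_of_tendsto_mul_atTop_of_integrableOn_Ioi htop
    (hint.integrableOn (s := Ioi 0))] at htop
  have hbot' : Tendsto (fun t => t * h (-t)) atTop (𝓝 (-limUnder atBot fun t => t * h t)) :=
    ((hbot.comp tendsto_neg_atTop_atBot).neg).congr fun t => by simp
  have hint_neg : Integrable fun t => h (-t) := hint.comp_neg
  rw [neg_eq_zero.1 (eq_zero_of_tendsto_mul_atTop_of_integrableOn_Ioi hbot'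
    (hint_neg.integrableOn (s := Ioi 0)))] at hbot
  have := integral_of_hasDerivAt_of_tendsto hH hH' hbot htop
  rw [integral_add hint hint'] at this
  linarith

theorem integral_fst_mul_eq_neg_integral {Y : Type*} [MeasurableSpace Y] {μ : Measure Y}
    [SigmaFinite μ] {g g' : ℝ × Y → ℝ}
    (hderiv : ∀ t y, HasDerivAt (fun t => g (t, y)) (g' (t, y)) t)
    (hg : Integrable g (volume.prod μ)) (hg' : Integrable (fun z => z.1 * g' z) (volume.prod μ)) :
    ∫ z, z.1 * g' z ∂(volume.prod μ) = -∫ z, g z ∂(volume.prod μ) := by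
  rw [integral_prod_symm _ hg', integral_prod_symm _ hg, ← integral_neg]
  refine integral_congr_ae ?_
  filter_upwards [hg'.prod_left_ae, hg.prod_left_ae] with y hy' hy
  exact integral_id_mul_deriv_eq_neg_integral (hderiv · y) hy hy'

theorem integral_coord_mul_fderiv_single_eq_neg_integral {d : ℕ}
    {g : EuclideanSpace ℝ (Fin d) → ℝ} (hg : Differentiable ℝ g) (hgi : Integrable g) (i : Fin d)
    (hi : Integrable fun x => x i * fderiv ℝ g x (EuclideanSpace.single i 1)) :
    ∫ x, x i * fderiv ℝ g x (EuclideanSpace.single i 1) = -∫ x, g x := by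
  obtain ⟨n, rfl⟩ : ∃ n, d = n + 1 := ⟨d - 1, by have := i.pos; omega⟩
  let e : ℝ × (Fin n → ℝ) ≃ᵐ EuclideanSpace ℝ (Fin (n + 1)) :=
    (MeasurableEquiv.piFinSuccAbove (fun _ => ℝ) i).symm.trans (MeasurableEquiv.toLp 2 _)
  have he : MeasurePreserving e (volume.prod volume) volume :=
    ((EuclideanSpace.volume_preserving_symm_measurableEquiv_toLp (Fin (n + 1))).symm _).comp
      ((volume_preserving_piFinSuccAbove (fun _ => ℝ) i).symm _)
  have he_coord (z) : e z i = z.1 := by simp [e]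
  have he_line (y : Fin n → ℝ) (t : ℝ) :
      HasDerivAt (fun t => e (t, y)) (EuclideanSpace.single i 1) t := by
    have : (fun t => e (t, y)) = fun t => e (0, y) + t • EuclideanSpace.single i 1 := by
      ext t j
      rcases eq_or_ne j i with rfl | hj
      · simp [e]
      · obtain ⟨k, rfl⟩ := Fin.exists_succAbove_eq hj
        simp [e, hj]
    rw [this]
    exact ((hasDerivAt_id t).smul_const _).const_add _ |>.congr_deriv (one_smul _ _)
  rw [← he.integral_comp e.measurableEmbedding, ← he.integral_comp e.measurableEmbedding]
  simp_rw [he_coord]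
  refine integral_fst_mul_eq_neg_integral
    (fun t y => (hg _).hasFDerivAt.comp_hasDerivAt t (he_line y t)) ?_ ?_
  · exact (he.integrable_comp_emb e.measurableEmbedding).mpr hgi
  · simpa [Function.comp_def, he_coord] using
      (he.integrable_comp_emb e.measurableEmbedding).mpr hi

theorem integral_fderiv_apply_self_eq_neg_mul_integral {d : ℕ}
    {g : EuclideanSpace ℝ (Fin d) → ℝ} (hg : Differentiable ℝ g) (hgi : Integrable g)
    (hdom : Integrable fun x => ‖x‖ * ‖fderiv ℝ g x‖) :
    ∫ x, fderiv ℝ g x x = -d * ∫ x, g x := by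
  have hcoord (i : Fin d) :
      Integrable fun x => x i * fderiv ℝ g x (EuclideanSpace.single i 1) := by
    refine hdom.mono' ((EuclideanSpace.proj i).continuous.measurable.mul
      (measurable_fderiv_apply_const ℝ g _)).aestronglyMeasurable (ae_of_all _ fun x => ?_)
    rw [norm_mul]
    exact mul_le_mul (PiLp.norm_apply_le x i)
      (by simpa using (fderiv ℝ g x).le_opNorm (EuclideanSpace.single i 1))
      (norm_nonneg _) (norm_nonneg _)
  calc ∫ x, fderiv ℝ g x x
      = ∫ x, ∑ i, x i * fderiv ℝ g x (EuclideanSpace.single i 1) := by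
        congr with x
        conv_lhs => arg 2; rw [← (EuclideanSpace.basisFun (Fin d) ℝ).sum_repr x]
        simp
    _ = ∑ i, ∫ x, x i * fderiv ℝ g x (EuclideanSpace.single i 1) :=
        integral_finsetSum _ fun i _ => hcoord i
    _ = -d * ∫ x, g x := by
        simp [integral_coord_mul_fderiv_single_eq_neg_integral hg hgi _ (hcoord _)]

theorem natCast_mul_integral_le_integral_norm_mul_norm_fderiv {d : ℕ}
    {g : EuclideanSpace ℝ (Fin d) → ℝ} (hg : Differentiable ℝ g) (hgi : Integrable g)
    (hdom : Integrable fun x => ‖x‖ * ‖fderiv ℝ g x‖) :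
    d * ∫ x, g x ≤ ∫ x, ‖x‖ * ‖fderiv ℝ g x‖ :=
  calc (d * ∫ x, g x) = -∫ x, fderiv ℝ g x x := by
        rw [integral_fderiv_apply_self_eq_neg_mul_integral hg hgi hdom]; ring
    _ ≤ ∫ x, |fderiv ℝ g x x| := (neg_le_abs _).trans abs_integral_le_integral_abs
    _ ≤ ∫ x, ‖x‖ * ‖fderiv ℝ g x‖ :=
        integral_mono_of_nonneg (ae_of_all _ fun x => abs_nonneg _) hdom
          (ae_of_all _ fun x => by simpa [mul_comm] using (fderiv ℝ g x).le_opNorm x)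

theorem norm_fderiv_eq_norm_gradient {E : Type*} [NormedAddCommGroup E] [InnerProductSpace ℝ E]
    [CompleteSpace E] (f : E → ℝ) (x : E) : ‖fderiv ℝ f x‖ = ‖gradient f x‖ := by
  rw [← toDual_gradient, LinearIsometryEquiv.norm_map]

theorem sq_integral_mul_le_integral_sq_mul_integral_sq {α : Type*} [MeasurableSpace α]
    {μ : Measure α} {a b : α → ℝ} (ha0 : 0 ≤ᵐ[μ] a) (hb0 : 0 ≤ᵐ[μ] b) (ha : MemLp a 2 μ)
    (hb : MemLp b 2 μ) :
    (∫ x, a x * b x ∂μ) ^ 2 ≤ (∫ x, a x ^ 2 ∂μ) * ∫ x, b x ^ 2 ∂μ := by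
  have hholder := integral_mul_le_Lp_mul_Lq_of_nonneg Real.HolderConjugate.two_two ha0 hb0
    (by simpa using ha) (by simpa using hb)
  simp only [rpow_two, ← sqrt_eq_rpow] at hholder
  calc (∫ x, a x * b x ∂μ) ^ 2
      ≤ (√(∫ x, a x ^ 2 ∂μ) * √(∫ x, b x ^ 2 ∂μ)) ^ 2 :=
        pow_le_pow_left₀ (integral_nonneg_of_ae <| (ha0.and hb0).mono fun x hx =>
          mul_nonneg hx.1 hx.2) hholder 2
    _ = (∫ x, a x ^ 2 ∂μ) * ∫ x, b x ^ 2 ∂μ := by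
        rw [mul_pow, sq_sqrt (integral_nonneg fun x => sq_nonneg _),
          sq_sqrt (integral_nonneg fun x => sq_nonneg _)]

theorem nonlinear_heisenberg_general (d : ℕ) (p : ℝ) (hp : 1 < p)
    (f : EuclideanSpace ℝ (Fin d) → ℝ)
    (hf : Differentiable ℝ f) (hnonneg : ∀ x, 0 ≤ f x)
    (hgrad : Integrable (fun x => ‖gradient f x‖ ^ 2))
    (hfp1 : Integrable (fun x => f x ^ (p + 1)))
    (hmom : Integrable (fun x => ‖x‖ ^ 2 * f x ^ (2 * p))) :
    ((d : ℝ) / (p + 1)) ^ 2 * (∫ x, f x ^ (p + 1)) ^ 2 ≤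
      (∫ x, ‖gradient f x‖ ^ 2) * ∫ x, ‖x‖ ^ 2 * f x ^ (2 * p) := by
  have hp1 : 0 < p + 1 := by linarith
  have hDg (x) :
      HasFDerivAt (fun y => f y ^ (p + 1)) (((p + 1) * f x ^ p) • fderiv ℝ f x) x := by
    simpa using (hf x).hasFDerivAt.rpow_const (p := p + 1) (Or.inr (by linarith))
  set a : EuclideanSpace ℝ (Fin d) → ℝ := fun x => ‖gradient f x‖
  set b : EuclideanSpace ℝ (Fin d) → ℝ := fun x => ‖x‖ * f x ^ p
  have hb_sq (x) : b x ^ 2 = ‖x‖ ^ 2 * f x ^ (2 * p) := by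
    rw [mul_pow, mul_comm 2 p, rpow_mul (hnonneg x), rpow_two]
  have ha : MemLp a 2 volume := by
    refine (memLp_two_iff_integrable_sq ?_).2 hgrad
    simpa only [a, ← norm_fderiv_eq_norm_gradient] using
      (measurable_fderiv ℝ f).norm.aestronglyMeasurable
  have hb : MemLp b 2 volume := by
    refine (memLp_two_iff_integrable_sq ?_).2 (by simpa only [hb_sq] using hmom)
    exact (measurable_norm.mul (hf.continuous.measurable.pow_const p)).aestronglyMeasurable
  have hnorm_Dg (x) : ‖x‖ * ‖fderiv ℝ (fun y => f y ^ (p + 1)) x‖ = (p + 1) * (a x * b x) := by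
    rw [(hDg x).fderiv, norm_smul, norm_of_nonneg (by positivity [hnonneg x]),
      norm_fderiv_eq_norm_gradient]
    ring
  have hEuler := natCast_mul_integral_le_integral_norm_mul_norm_fderiv
    (fun x => (hDg x).differentiableAt) hfp1
    (by simpa only [hnorm_Dg, Pi.mul_apply] using (ha.integrable_mul hb).const_mul (p + 1))
  simp only [hnorm_Dg, integral_const_mul] at hEuler
  have hCS := sq_integral_mul_le_integral_sq_mul_integral_sq
    (ae_of_all _ fun x => norm_nonneg _) (ae_of_all _ fun x => by positivity [hnonneg x]) ha hb
  simp only [hb_sq] at hCS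
  have hI : 0 ≤ ∫ x, f x ^ (p + 1) := integral_nonneg fun x => rpow_nonneg (hnonneg x) _
  calc ((d : ℝ) / (p + 1)) ^ 2 * (∫ x, f x ^ (p + 1)) ^ 2
      = (d * (∫ x, f x ^ (p + 1)) / (p + 1)) ^ 2 := by ring
    _ ≤ (∫ x, a x * b x) ^ 2 :=
        pow_le_pow_left₀ (by positivity) ((div_le_iff₀' hp1).2 hEuler) 2
    _ ≤ _ := hCS

/-- A nonlinear extension of the Heisenberg uncertainty principle:
`(d/(p+1))² (∫ f^{p+1})² ≤ (∫ |∇f|²)(∫ |x|² f^{2p})` for nonnegative `f`. -/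
theorem nonlinear_heisenberg (d : ℕ) (hd : 1 ≤ d) (p : ℝ) (hp : 1 < p)
    (f : EuclideanSpace ℝ (Fin d) → ℝ)
    (hf : Differentiable ℝ f) (hnonneg : ∀ x, 0 ≤ f x)
    (hgrad : Integrable (fun x => ‖gradient f x‖ ^ 2))
    (hfp1 : Integrable (fun x => f x ^ (p + 1)))
    (hmom : Integrable (fun x => ‖x‖ ^ 2 * f x ^ (2 * p))) :
    ((d : ℝ) / (p + 1)) ^ 2 * (∫ x, f x ^ (p + 1)) ^ 2 ≤
      (∫ x, ‖gradient f x‖ ^ 2) * ∫ x, ‖x‖ ^ 2 * f x ^ (2 * p) :=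
  nonlinear_heisenberg_general d p hp f hf hnonneg hgrad hfp1 hmom
end

section
/- Let t ↦ Q(t) be a C¹ positive function on [0,T] satisfying the differential equation Q'(t) = Q(t)(Q(t) - 4). If Q(T) ≥ 4 + η for some η > 0, then Q(t) ≥ 4 + 4η e^{-4T}/(4 + η - η e^{-4T}) for all t ∈ [0,T]. -/
/-!
The substitution `u = 1 - a / Q` linearises the Riccati equation `Q' = Q (Q - a)` into
`u' = a u`, so `(1 - a / Q t) e^{-a t}` is conserved. Going backwards from `T`, the quantity
`1 - 4 / Q` can therefore shrink at most by the factor `e^{-4T}`, which starting from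
`1 - 4 / Q T ≥ η / (4 + η)` gives the claimed lower bound on `Q`.
-/

open Real

theorem hasDerivAt_riccati_invariant {Q : ℝ → ℝ} {a s : ℝ} (hQ : Q s ≠ 0)
    (hode : HasDerivAt Q (Q s * (Q s - a)) s) :
    HasDerivAt (fun s => (1 - a / Q s) * exp (-a * s)) 0 s := by
  have hfactor : HasDerivAt (fun s => 1 - a / Q s) (a * (Q s * (Q s - a) / Q s ^ 2)) s := by
    simpa [div_eq_mul_inv, neg_div] using ((hode.inv hQ).const_mul a).const_sub 1
  have hexp : HasDerivAt (fun s => exp (-a * s)) (exp (-a * s) * -a) s := by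
    simpa using ((hasDerivAt_id s).const_mul (-a)).exp
  refine (hfactor.mul hexp).congr_deriv ?_
  field_simp
  ring

section Riccati

variable {Q : ℝ → ℝ} {a α β s t : ℝ}

theorem riccati_invariant_eq (hpos : ∀ t ∈ Set.Icc α β, 0 < Q t)
    (hode : ∀ t ∈ Set.Icc α β, HasDerivAt Q (Q t * (Q t - a)) t)
    (hs : s ∈ Set.Icc α β) (ht : t ∈ Set.Icc α β) :
    (1 - a / Q t) * exp (-a * t) = (1 - a / Q s) * exp (-a * s) := by
  have hderiv (x) (hx : x ∈ Set.Icc α β) :=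
    hasDerivAt_riccati_invariant (hpos x hx).ne' (hode x hx)
  have hconst := constant_of_has_deriv_right_zero
    (fun x hx => (hderiv x hx).continuousAt.continuousWithinAt)
    (fun x hx => (hderiv x (Set.mem_Icc_of_Ico hx)).hasDerivWithinAt)
  rw [hconst t ht, hconst s hs]

theorem one_sub_div_eq_mul_exp_of_riccati (hpos : ∀ t ∈ Set.Icc α β, 0 < Q t)
    (hode : ∀ t ∈ Set.Icc α β, HasDerivAt Q (Q t * (Q t - a)) t)
    (hs : s ∈ Set.Icc α β) (ht : t ∈ Set.Icc α β) :
    1 - a / Q t = (1 - a / Q s) * exp (a * (t - s)) := by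
  rw [show a * (t - s) = -a * s - -a * t by ring, exp_sub, ← mul_div_assoc,
    ← riccati_invariant_eq hpos hode hs ht, mul_div_cancel_right₀ _ (exp_pos _).ne']

end Riccati

theorem div_one_sub_le_of_le_one_sub_div {a c q : ℝ} (hq : 0 < q) (hc : c < 1)
    (h : c ≤ 1 - a / q) : a / (1 - c) ≤ q := by
  rw [div_le_iff₀ (sub_pos.mpr hc)]
  rw [le_sub_iff_add_le, ← le_sub_iff_add_le', div_le_iff₀ hq] at h
  linarith

theorem add_mul_div_eq_div_one_sub {a η e : ℝ} (ha : a + η ≠ 0) (hD : a + η - η * e ≠ 0) :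
    a + a * η * e / (a + η - η * e) = a / (1 - η / (a + η) * e) := by
  rw [show 1 - η / (a + η) * e = (a + η - η * e) / (a + η) by field_simp]
  field_simp
  ring

/-- The initial time layer lemma: if `Q' = Q (Q - 4)` on `[0,T]`, `Q > 0`, and
`Q(T) ≥ 4 + η` with `η > 0`, then
`Q(t) ≥ 4 + 4η e^{-4T}/(4 + η - η e^{-4T})` for all `t ∈ [0,T]`. -/
theorem initial_time_layer (T η : ℝ) (hT : 0 ≤ T) (hη : 0 < η)
    (Q : ℝ → ℝ) (hpos : ∀ t ∈ Set.Icc (0 : ℝ) T, 0 < Q t)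
    (hode : ∀ t ∈ Set.Icc (0 : ℝ) T, HasDerivAt Q (Q t * (Q t - 4)) t)
    (hQT : Q T ≥ 4 + η) :
    ∀ t ∈ Set.Icc (0 : ℝ) T,
      Q t ≥ 4 + 4 * η * Real.exp (-4 * T) / (4 + η - η * Real.exp (-4 * T)) := by
  intro t ht
  have hexp_le_one : exp (-4 * T) ≤ 1 := exp_le_one_iff.mpr (by linarith)
  have hD : 0 < 4 + η - η * exp (-4 * T) := by nlinarith
  have hc_lt_one : η / (4 + η) * exp (-4 * T) < 1 := by
    rw [div_mul_eq_mul_div, div_lt_one (by linarith)]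
    linarith
  have hgap_T : η / (4 + η) ≤ 1 - 4 / Q T := by
    rw [le_sub_comm, show 1 - η / (4 + η) = 4 / (4 + η) by field_simp; ring]
    gcongr
  have hgap_t : η / (4 + η) * exp (-4 * T) ≤ 1 - 4 / Q t := by
    rw [one_sub_div_eq_mul_exp_of_riccati hpos hode ⟨hT, le_rfl⟩ ht]
    gcongr ?_ * exp ?_
    · exact (div_pos hη (by linarith)).le.trans hgap_T
    · linarith [ht.1]
  rw [ge_iff_le, add_mul_div_eq_div_one_sub (by positivity) hD.ne']
  exact div_one_sub_le_of_le_one_sub_div (hpos t ht) hc_lt_one hgap_t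
end

section
/- Let d ≥ 1, 1 ≤ p < 2, and μ a probability measure on ℝ^d. For each f ∈ L²(ℝ^d, dμ), the function p ↦ (2p/(2-p)) (∫ |f|² dμ - (∫ |f|^p dμ)^{2/p}) is non-decreasing on [1,2). -/
/-!
Hölder's inequality makes `r ↦ ∫ |f|^r` log-convex, so for `p < q < 2` the `L^q` quantity
`(∫ |f|^q)^{2/q}` is a weighted geometric mean of `∫ |f|^2` and `(∫ |f|^p)^{2/p}`; by weighted
AM-GM it is at most the corresponding arithmetic mean, and after clearing denominators that
inequality is exactly the comparison of the functional at `p` and at `q`.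
-/

open MeasureTheory Real

section
variable {α : Type*} [MeasurableSpace α] {μ : Measure α} {f : α → ℝ}

theorem MeasureTheory.MemLp.abs_rpow_mul {s c : ℝ} (hs : 0 < s) (hc : 0 < c)
    (hf : MemLp f (ENNReal.ofReal s) μ) :
    MemLp (fun x => |f x| ^ (c * s)) (ENNReal.ofReal (1 / c)) μ := by
  have h := hf.norm_rpow_div (ENNReal.ofReal (c * s))
  rw [← ENNReal.ofReal_div_of_pos (by positivity), ENNReal.toReal_ofReal (by positivity),
    div_mul_cancel_right₀ hs.ne', ← one_div] at h
  simpa only [Real.norm_eq_abs] using h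

theorem integral_abs_rpow_mul_add_mul_le {a b s t : ℝ} (ha : 0 < a) (hb : 0 < b)
    (hab : a + b = 1) (hs : 0 < s) (ht : 0 < t) (hfs : MemLp f (ENNReal.ofReal s) μ)
    (hft : MemLp f (ENNReal.ofReal t) μ) :
    ∫ x, |f x| ^ (a * s + b * t) ∂μ ≤
      (∫ x, |f x| ^ s ∂μ) ^ a * (∫ x, |f x| ^ t ∂μ) ^ b := by
  have holder := integral_mul_le_Lp_mul_Lq_of_nonneg (holderConjugate_one_div ha hb hab)
    (ae_of_all _ fun x => rpow_nonneg (abs_nonneg (f x)) (a * s))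
    (ae_of_all _ fun x => rpow_nonneg (abs_nonneg (f x)) (b * t))
    (hfs.abs_rpow_mul hs ha) (hft.abs_rpow_mul ht hb)
  have hpow : ∀ (c u : ℝ) (x : α), 0 < c → (|f x| ^ (c * u)) ^ (1 / c) = |f x| ^ u := by
    intro c u x hc
    rw [← rpow_mul (abs_nonneg _)]
    congr 1
    field_simp
  simpa only [← rpow_add' (abs_nonneg _) (by positivity : a * s + b * t ≠ 0), one_div_one_div,
    hpow _ _ _ ha, hpow _ _ _ hb] using holder

theorem integral_abs_rpow_interpolation [IsFiniteMeasure μ] (hf : MemLp f 2 μ) {p q : ℝ}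
    (hp : 0 < p) (hpq : p < q) (hq : q < 2) :
    q * (2 - p) * (∫ x, |f x| ^ q ∂μ) ^ (2 / q) ≤
      2 * (q - p) * ∫ x, |f x| ^ (2 : ℝ) ∂μ + p * (2 - q) * (∫ x, |f x| ^ p ∂μ) ^ (2 / p) := by
  set A := ∫ x, |f x| ^ (2 : ℝ) ∂μ
  set I := ∫ x, |f x| ^ p ∂μ
  have hA : 0 ≤ A := integral_nonneg fun x => rpow_nonneg (abs_nonneg _) _
  have hI : 0 ≤ I := integral_nonneg fun x => rpow_nonneg (abs_nonneg _) _
  have hq0 : 0 < q := by linarith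
  have h2p : 0 < 2 - p := by linarith
  set a := (q - p) / (2 - p) with ha_def
  set b := (2 - q) / (2 - p) with hb_def
  have ha : 0 < a := div_pos (by linarith) h2p
  have hb : 0 < b := div_pos (by linarith) h2p
  have hab : a + b = 1 := by rw [ha_def, hb_def]; field_simp; ring
  have hf2 : MemLp f (ENNReal.ofReal 2) μ := by simpa using hf
  have hfp : MemLp f (ENNReal.ofReal p) μ :=
    hf2.mono_exponent (ENNReal.ofReal_le_ofReal (by linarith))
  have hq_eq : a * 2 + b * p = q := by rw [ha_def, hb_def]; field_simp; ring
  have lyapunov : ∫ x, |f x| ^ q ∂μ ≤ A ^ a * I ^ b := by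
    rw [← hq_eq]
    exact integral_abs_rpow_mul_add_mul_le ha hb hab two_pos hp hf2 hfp
  have amgm : A ^ (2 * a / q) * (I ^ (2 / p)) ^ (p * b / q) ≤
      2 * a / q * A + p * b / q * I ^ (2 / p) :=
    geom_mean_le_arith_mean2_weighted (by positivity) (by positivity) hA (by positivity)
      (by rw [← add_div, mul_comm 2, mul_comm p, hq_eq, div_self hq0.ne'])
  have key : (∫ x, |f x| ^ q ∂μ) ^ (2 / q) ≤ 2 * a / q * A + p * b / q * I ^ (2 / p) := calc
    _ ≤ (A ^ a * I ^ b) ^ (2 / q) :=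
      rpow_le_rpow (integral_nonneg fun x => rpow_nonneg (abs_nonneg _) _) lyapunov
        (by positivity)
    _ = A ^ (2 * a / q) * (I ^ (2 / p)) ^ (p * b / q) := by
      rw [mul_rpow (by positivity) (by positivity), ← rpow_mul hA, ← rpow_mul hI,
        ← rpow_mul hI]
      congr 2 <;> field_simp
    _ ≤ _ := amgm
  calc q * (2 - p) * (∫ x, |f x| ^ q ∂μ) ^ (2 / q)
      ≤ q * (2 - p) * (2 * a / q * A + p * b / q * I ^ (2 / p)) := by gcongr
    _ = 2 * ((2 - p) * a) * A + p * ((2 - p) * b) * I ^ (2 / p) := by field_simp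
    _ = _ := by rw [ha_def, hb_def, mul_div_cancel₀ _ h2p.ne', mul_div_cancel₀ _ h2p.ne']

end

theorem latala_oleszkiewicz_monotone_general (d : ℕ)
    (μ : Measure (EuclideanSpace ℝ (Fin d))) [IsProbabilityMeasure μ]
    (f : EuclideanSpace ℝ (Fin d) → ℝ) (hf : MemLp f 2 μ) :
    MonotoneOn
      (fun p : ℝ => (2 * p / (2 - p)) *
        ((∫ x, |f x| ^ (2 : ℝ) ∂μ) - (∫ x, |f x| ^ p ∂μ) ^ (2 / p)))
      (Set.Ico (1 : ℝ) 2) := by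
  intro p ⟨hp1, hp2⟩ q ⟨_, hq2⟩ hpq
  rcases hpq.eq_or_lt with rfl | hpq
  · rfl
  have key := integral_abs_rpow_interpolation hf (by linarith) hpq hq2
  dsimp only
  rw [div_mul_eq_mul_div, div_mul_eq_mul_div, div_le_div_iff₀ (by linarith) (by linarith)]
  linarith

/-- Monotonicity in `p` of the functional
`p ↦ (2p/(2-p)) (∫ |f|² dμ - (∫ |f|ᵖ dμ)^{2/p})` on `[1,2)` for `f ∈ L²(μ)`,
`μ` a probability measure (Latała–Oleszkiewicz). -/
theorem latala_oleszkiewicz_monotone (d : ℕ) (hd : 1 ≤ d)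
    (μ : Measure (EuclideanSpace ℝ (Fin d))) [IsProbabilityMeasure μ]
    (f : EuclideanSpace ℝ (Fin d) → ℝ) (hf : MemLp f 2 μ) :
    MonotoneOn
      (fun p : ℝ => (2 * p / (2 - p)) *
        ((∫ x, |f x| ^ (2 : ℝ) ∂μ) - (∫ x, |f x| ^ p ∂μ) ^ (2 / p)))
      (Set.Ico (1 : ℝ) 2) :=
  latala_oleszkiewicz_monotone_general d μ f hf
end
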